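/- Let g₀ : ℝ × ℤ × ℤ → Mat(m×m, ℂ) be an invertible solution of the semi-discrete chiral model equation (g₀ g₀_{,1}^{-1})_t + (g₀ g₀_{,2}^{-1})_{,1,-2} − g₀ g₀_{,2}^{-1} = 0. Let P, Q be n×n matrix functions with P_t = 0, P_{,2} = P, Q_t = 0, Q_{,2} = Q, and let ω̃ be an n×n matrix function with ω̃_{,2} = ω̃, ω̃_t = 0 and Q ω̃_{,1} = ω̃ P (so that γ₁ := ω̃ P − Q ω̃_{,1} = 0 and γ₂ := −ω̃_t = 0). Let θ (m×n) and η (n×m) be entrywise differentiable in t and satisfy θ_{,-2} = −(θ P)_{,-1} − g₀_{,-1} g₀^{-1} θ, θ_t = g₀ g₀_{,2}^{-1} θ_{,2}, η_{,2} = −Q η_{,1} − η g₀ g₀_{,1}^{-1}, η_t = −(η g₀)_{,-2} g₀^{-1}. Let Ω̃ be an invertible n×n matrix function, entrywise differentiable in t, satisfying Ω̃_{,2} − Ω̃ = η θ, Ω̃_{,1,-2} − (I + Q) Ω̃_{,1} + Ω̃ P + (η_{,1,-2} − η) θ_{,1,-2} = 0, and Ω̃_t = −η_t θ. If g := (I −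 θ Ω̃_{,2}^{-1} η) g₀ is invertible, then g also satisfies the semi-discrete chiral model equation (g g_{,1}^{-1})_t + (g g_{,2}^{-1})_{,1,-2} − g g_{,2}^{-1} = 0 (binary Darboux transformation). -/

import Mathlib

/-!
Put `K := θ_{,-2} Ω̃⁻¹ η`. Since `Ω̃_{,2} − Ω̃ = η θ`, the dressing factor `I − θ Ω̃_{,2}⁻¹ η` has
inverse `I + θ Ω̃⁻¹ η`. With this, the linear relations for `θ`, `η` and the two difference
equations for `Ω̃` collapse `g g_{,1}⁻¹` to `g₀ g₀_{,1}⁻¹ + K_{,2} − K_{,1}`, while the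
`t`-evolutions of `θ`, `η`, `Ω̃` give `K_t = g_{,-2} g⁻¹ − g₀_{,-2} g₀⁻¹`. Differentiating the first
identity and inserting the seed equation turns the chiral equation for `g₀` into the one for `g`.
-/

open Matrix

section EntrywiseDeriv

variable {𝕜 𝕜' : Type*} [NontriviallyNormedField 𝕜] [NormedField 𝕜'] [NormedAlgebra 𝕜 𝕜']
  {l m n : Type*}

def HasMatrixDerivAt (A : 𝕜 → Matrix l m 𝕜') (A' : Matrix l m 𝕜') (t : 𝕜) : Prop :=
  ∀ i j, HasDerivAt (fun s => A s i j) (A' i j) t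

theorem HasMatrixDerivAt.mul [Fintype m] {A : 𝕜 → Matrix l m 𝕜'} {B : 𝕜 → Matrix m n 𝕜'}
    {A' : Matrix l m 𝕜'} {B' : Matrix m n 𝕜'} {t : 𝕜}
    (hA : HasMatrixDerivAt A A' t) (hB : HasMatrixDerivAt B B' t) :
    HasMatrixDerivAt (fun s => A s * B s) (A' * B t + A t * B') t := by
  intro i j
  simpa only [mul_apply, Matrix.add_apply, Finset.sum_add_distrib] using
    HasDerivAt.fun_sum (u := Finset.univ) fun k _ => (hA i k).fun_mul (hB k j)

theorem differentiableAt_det [Fintype n] [DecidableEq n] {A : 𝕜 → Matrix n n 𝕜'} {t : 𝕜}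
    (hA : ∀ i j, DifferentiableAt 𝕜 (fun s => A s i j) t) :
    DifferentiableAt 𝕜 (fun s => (A s).det) t := by
  simp only [det_apply]
  fun_prop

theorem differentiableAt_inv_apply [Fintype n] [DecidableEq n] {A : 𝕜 → Matrix n n 𝕜'} {t : 𝕜}
    (hA : ∀ i j, DifferentiableAt 𝕜 (fun s => A s i j) t) (hunit : IsUnit (A t)) (i j : n) :
    DifferentiableAt 𝕜 (fun s => (A s)⁻¹ i j) t := by
  simp only [inv_def, Matrix.smul_apply, adjugate_apply, Ring.inverse_eq_inv', smul_eq_mul]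
  refine ((differentiableAt_det hA).inv ?_).mul (differentiableAt_det fun k l => ?_)
  · exact ((isUnit_iff_isUnit_det _).mp hunit).ne_zero
  · by_cases hk : k = j <;> simp [updateRow_apply, hk, hA k l]

theorem HasMatrixDerivAt.inv [Fintype n] [DecidableEq n] {A : 𝕜 → Matrix n n 𝕜'}
    {A' : Matrix n n 𝕜'} {t : 𝕜} (hA : HasMatrixDerivAt A A' t) (hunit : IsUnit (A t)) :
    HasMatrixDerivAt (fun s => (A s)⁻¹) (-((A t)⁻¹ * A' * (A t)⁻¹)) t := by
  have hdiff : ∀ i j, DifferentiableAt 𝕜 (fun s => A s i j) t :=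
    fun i j => (hA i j).differentiableAt
  set B' : Matrix n n 𝕜' := of fun i j => deriv (fun s => (A s)⁻¹ i j) t
  have hB : HasMatrixDerivAt (fun s => (A s)⁻¹) B' t :=
    fun i j => (differentiableAt_inv_apply hdiff hunit i j).hasDerivAt
  have hdet : IsUnit (A t).det := (isUnit_iff_isUnit_det _).mp hunit
  have hnear : ∀ᶠ s in nhds t, A s * (A s)⁻¹ = 1 := by
    have hcont := (differentiableAt_det hdiff).continuousAt
    filter_upwards [hcont.eventually_ne hdet.ne_zero] with s hs
    exact mul_nonsing_inv _ (isUnit_iff_ne_zero.mpr hs)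
  have hprod : A' * (A t)⁻¹ + A t * B' = 0 := by
    ext i j
    refine ((hA.mul hB) i j).unique
      ((hasDerivAt_const t ((1 : Matrix n n 𝕜') i j)).congr_of_eventuallyEq ?_)
    filter_upwards [hnear] with s hs
    rw [hs]
  have hB' : B' = -((A t)⁻¹ * A' * (A t)⁻¹) :=
    calc B' = (A t)⁻¹ * (A t * B') := (nonsing_inv_mul_cancel_left _ _ hdet).symm
      _ = -((A t)⁻¹ * A' * (A t)⁻¹) := by
        rw [eq_neg_of_add_eq_zero_right hprod, Matrix.mul_neg, Matrix.mul_assoc]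
  exact hB' ▸ hB

end EntrywiseDeriv

section DressingAlgebra

variable {R : Type*} [CommRing R] {m n : Type*} [Fintype m] [DecidableEq m] [Fintype n]
  [DecidableEq n]

theorem inv_one_sub_mul_inv_mul {Ω W : Matrix n n R} {θ : Matrix m n R} {η : Matrix n m R}
    (hΩ : IsUnit Ω) (hW : IsUnit W) (h : W - Ω = η * θ) :
    (1 - θ * W⁻¹ * η)⁻¹ = 1 + θ * Ω⁻¹ * η := by
  have hWΩ : W - η * θ = Ω := by rw [← h]; abel
  apply inv_eq_right_inv
  calc (1 - θ * W⁻¹ * η) * (1 + θ * Ω⁻¹ * η)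
      = 1 + θ * W⁻¹ * ((W - η * θ) * Ω⁻¹ - 1) * η := by
        simp only [Matrix.mul_add, Matrix.mul_sub, Matrix.sub_mul,
          Matrix.mul_one, Matrix.one_mul, Matrix.mul_assoc,
          nonsing_inv_mul_cancel_left _ _ ((isUnit_iff_isUnit_det W).mp hW)]
        abel
    _ = 1 := by
        rw [hWΩ, mul_nonsing_inv _ ((isUnit_iff_isUnit_det Ω).mp hΩ), sub_self, Matrix.mul_zero,
          Matrix.zero_mul, add_zero]

theorem dressing_conj_eq {S : Matrix m m R} {θ θ₁ θ₁' : Matrix m n R}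
    {η η₁ η₂ : Matrix n m R} {Ω W Ω₁ P Q : Matrix n n R} (hW : IsUnit W) (hΩ₁ : IsUnit Ω₁)
    (hη : η₂ = -(Q * η₁) - η * S) (hθ : θ₁' = -(θ * P) - S * θ₁)
    (hWΩ : W - Ω = η * θ) (hQ : Q * Ω₁ = Ω * P - η * θ₁') :
    (1 - θ * W⁻¹ * η) * S * (1 + θ₁ * Ω₁⁻¹ * η₁) = S + θ * W⁻¹ * η₂ - θ₁' * Ω₁⁻¹ * η₁ := by
  have hΩ : Ω = W - η * θ := by rw [← hWΩ]; abel
  calc (1 - θ * W⁻¹ * η) * S * (1 + θ₁ * Ω₁⁻¹ * η₁)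
      = S + θ * W⁻¹ * η₂ - θ₁' * Ω₁⁻¹ * η₁
        + θ * W⁻¹ * (Q * Ω₁ - (Ω * P - η * θ₁')) * Ω₁⁻¹ * η₁ := by
        subst hη hθ hΩ
        simp only [Matrix.mul_add, Matrix.mul_sub, Matrix.sub_mul,
          Matrix.mul_neg, Matrix.neg_mul, Matrix.mul_one, Matrix.one_mul, Matrix.mul_assoc,
          nonsing_inv_mul_cancel_left _ _ ((isUnit_iff_isUnit_det W).mp hW),
          mul_nonsing_inv_cancel_left _ _ ((isUnit_iff_isUnit_det Ω₁).mp hΩ₁)]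
        abel
    _ = _ := by rw [hQ, sub_self, Matrix.mul_zero, Matrix.zero_mul, Matrix.zero_mul, add_zero]

end DressingAlgebra

section Lattice

variable {X R : Type*} [CommRing R] {m n : Type*} [Fintype n] [DecidableEq n]

noncomputable def dressingPotential (θ : X → ℤ → ℤ → Matrix m n R) (Ω : X → ℤ → ℤ → Matrix n n R)
    (η : X → ℤ → ℤ → Matrix n m R) (t : X) (j₁ j₂ : ℤ) : Matrix m m R :=
  θ t j₁ (j₂ - 1) * (Ω t j₁ j₂)⁻¹ * η t j₁ j₂

theorem dressed_mul_inv_eq_add_dressingPotential [Fintype m] [DecidableEq m]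
    (g₀ g : X → ℤ → ℤ → Matrix m m R) (P Q Ω : X → ℤ → ℤ → Matrix n n R)
    (θ : X → ℤ → ℤ → Matrix m n R) (η : X → ℤ → ℤ → Matrix n m R)
    (hθ1 : ∀ t j₁ j₂, θ t j₁ (j₂ - 1)
      = -(θ t (j₁ - 1) j₂ * P t (j₁ - 1) j₂) - g₀ t (j₁ - 1) j₂ * (g₀ t j₁ j₂)⁻¹ * θ t j₁ j₂)
    (hη1 : ∀ t j₁ j₂, η t j₁ (j₂ + 1)
      = -(Q t j₁ j₂ * η t (j₁ + 1) j₂) - η t j₁ j₂ * (g₀ t j₁ j₂ * (g₀ t (j₁ + 1) j₂)⁻¹))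
    (hΩinv : ∀ t j₁ j₂, IsUnit (Ω t j₁ j₂))
    (hΩ1 : ∀ t j₁ j₂, Ω t j₁ (j₂ + 1) - Ω t j₁ j₂ = η t j₁ j₂ * θ t j₁ j₂)
    (hΩ2 : ∀ t j₁ j₂, Ω t (j₁ + 1) (j₂ - 1) - (1 + Q t j₁ j₂) * Ω t (j₁ + 1) j₂
        + Ω t j₁ j₂ * P t j₁ j₂
        + (η t (j₁ + 1) (j₂ - 1) - η t j₁ j₂) * θ t (j₁ + 1) (j₂ - 1) = 0)
    (hg : ∀ t j₁ j₂, g t j₁ j₂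
      = (1 - θ t j₁ j₂ * (Ω t j₁ (j₂ + 1))⁻¹ * η t j₁ j₂) * g₀ t j₁ j₂)
    (t : X) (j₁ j₂ : ℤ) :
    g t j₁ j₂ * (g t (j₁ + 1) j₂)⁻¹ = g₀ t j₁ j₂ * (g₀ t (j₁ + 1) j₂)⁻¹
      + dressingPotential θ Ω η t j₁ (j₂ + 1) - dressingPotential θ Ω η t (j₁ + 1) j₂ := by
  have hQ : Q t j₁ j₂ * Ω t (j₁ + 1) j₂
      = Ω t j₁ j₂ * P t j₁ j₂ - η t j₁ j₂ * θ t (j₁ + 1) (j₂ - 1) := by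
    have h1 := hΩ1 t (j₁ + 1) (j₂ - 1)
    rw [sub_add_cancel] at h1
    rw [← sub_eq_zero, ← neg_eq_zero, ← hΩ2 t j₁ j₂, Matrix.sub_mul, ← h1, Matrix.add_mul,
      Matrix.one_mul]
    abel
  have hθ := hθ1 t (j₁ + 1) j₂
  rw [add_sub_cancel_right] at hθ
  rw [hg, hg, Matrix.mul_inv_rev, inv_one_sub_mul_inv_mul (hΩinv t _ _) (hΩinv t _ _) (hΩ1 t _ _),
    dressingPotential, dressingPotential, add_sub_cancel_right, ← Matrix.mul_assoc,
    Matrix.mul_assoc _ (g₀ t j₁ j₂)]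
  exact dressing_conj_eq (hΩinv t _ _) (hΩinv t _ _) (hη1 t j₁ j₂) hθ (hΩ1 t j₁ j₂) hQ

end Lattice

section DressingPotentialDeriv

variable {𝕜 𝕜' : Type*} [NontriviallyNormedField 𝕜] [NormedField 𝕜'] [NormedAlgebra 𝕜 𝕜']
  {m n : Type*} [Fintype m] [DecidableEq m] [Fintype n] [DecidableEq n]

theorem hasMatrixDerivAt_dressingPotential
    (g₀ g : 𝕜 → ℤ → ℤ → Matrix m m 𝕜') (θ θt : 𝕜 → ℤ → ℤ → Matrix m n 𝕜')
    (η ηt : 𝕜 → ℤ → ℤ → Matrix n m 𝕜') (Ω Ωt : 𝕜 → ℤ → ℤ → Matrix n n 𝕜')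
    (hθt : ∀ t j₁ j₂, HasMatrixDerivAt (fun s => θ s j₁ j₂) (θt t j₁ j₂) t)
    (hθ2 : ∀ t j₁ j₂, θt t j₁ j₂ = g₀ t j₁ j₂ * (g₀ t j₁ (j₂ + 1))⁻¹ * θ t j₁ (j₂ + 1))
    (hηt : ∀ t j₁ j₂, HasMatrixDerivAt (fun s => η s j₁ j₂) (ηt t j₁ j₂) t)
    (hη2 : ∀ t j₁ j₂, ηt t j₁ j₂ = -((η t j₁ (j₂ - 1) * g₀ t j₁ (j₂ - 1)) * (g₀ t j₁ j₂)⁻¹))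
    (hΩinv : ∀ t j₁ j₂, IsUnit (Ω t j₁ j₂))
    (hΩt : ∀ t j₁ j₂, HasMatrixDerivAt (fun s => Ω s j₁ j₂) (Ωt t j₁ j₂) t)
    (hΩ1 : ∀ t j₁ j₂, Ω t j₁ (j₂ + 1) - Ω t j₁ j₂ = η t j₁ j₂ * θ t j₁ j₂)
    (hΩ3 : ∀ t j₁ j₂, Ωt t j₁ j₂ = -(ηt t j₁ j₂ * θ t j₁ j₂))
    (hg : ∀ t j₁ j₂, g t j₁ j₂
      = (1 - θ t j₁ j₂ * (Ω t j₁ (j₂ + 1))⁻¹ * η t j₁ j₂) * g₀ t j₁ j₂)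
    (t : 𝕜) (j₁ j₂ : ℤ) :
    HasMatrixDerivAt (fun s => dressingPotential θ Ω η s j₁ j₂)
      (g t j₁ (j₂ - 1) * (g t j₁ j₂)⁻¹ - g₀ t j₁ (j₂ - 1) * (g₀ t j₁ j₂)⁻¹) t := by
  unfold dressingPotential
  convert ((hθt t j₁ (j₂ - 1)).mul ((hΩt t j₁ j₂).inv (hΩinv t j₁ j₂))).mul (hηt t j₁ j₂) using 1
  rw [hg, hg, sub_add_cancel, Matrix.mul_inv_rev,
    inv_one_sub_mul_inv_mul (hΩinv t _ _) (hΩinv t _ _) (hΩ1 t _ _), hθ2, sub_add_cancel, hΩ3, hη2]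
  simp only [Matrix.mul_add, Matrix.add_mul, Matrix.sub_mul, Matrix.mul_neg, Matrix.neg_mul,
    Matrix.mul_one, Matrix.one_mul, Matrix.mul_assoc, neg_neg]
  abel

end DressingPotentialDeriv

theorem stmt_6_general (m n : ℕ)
    (g₀ : ℝ → ℤ → ℤ → Matrix (Fin m) (Fin m) ℂ)
    (hseed : ∀ t j₁ j₂ (a b : Fin m),
      HasDerivAt (fun s => (g₀ s j₁ j₂ * (g₀ s (j₁ + 1) j₂)⁻¹) a b)
        ((g₀ t j₁ j₂ * (g₀ t j₁ (j₂ + 1))⁻¹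
          - g₀ t (j₁ + 1) (j₂ - 1) * (g₀ t (j₁ + 1) j₂)⁻¹) a b) t)
    (P Q : ℝ → ℤ → ℤ → Matrix (Fin n) (Fin n) ℂ)
    (θ θt : ℝ → ℤ → ℤ → Matrix (Fin m) (Fin n) ℂ)
    (hθt : ∀ t j₁ j₂ (a : Fin m) (b : Fin n),
      HasDerivAt (fun s => θ s j₁ j₂ a b) (θt t j₁ j₂ a b) t)
    (hθ1 : ∀ t j₁ j₂, θ t j₁ (j₂ - 1)
      = -(θ t (j₁ - 1) j₂ * P t (j₁ - 1) j₂) - g₀ t (j₁ - 1) j₂ * (g₀ t j₁ j₂)⁻¹ * θ t j₁ j₂)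
    (hθ2 : ∀ t j₁ j₂, θt t j₁ j₂ = g₀ t j₁ j₂ * (g₀ t j₁ (j₂ + 1))⁻¹ * θ t j₁ (j₂ + 1))
    (η ηt : ℝ → ℤ → ℤ → Matrix (Fin n) (Fin m) ℂ)
    (hηt : ∀ t j₁ j₂ (a : Fin n) (b : Fin m),
      HasDerivAt (fun s => η s j₁ j₂ a b) (ηt t j₁ j₂ a b) t)
    (hη1 : ∀ t j₁ j₂, η t j₁ (j₂ + 1)
      = -(Q t j₁ j₂ * η t (j₁ + 1) j₂) - η t j₁ j₂ * (g₀ t j₁ j₂ * (g₀ t (j₁ + 1) j₂)⁻¹))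
    (hη2 : ∀ t j₁ j₂, ηt t j₁ j₂ = -((η t j₁ (j₂ - 1) * g₀ t j₁ (j₂ - 1)) * (g₀ t j₁ j₂)⁻¹))
    (Om Omt : ℝ → ℤ → ℤ → Matrix (Fin n) (Fin n) ℂ)
    (hOminv : ∀ t j₁ j₂, IsUnit (Om t j₁ j₂))
    (hOmt : ∀ t j₁ j₂ (a b : Fin n), HasDerivAt (fun s => Om s j₁ j₂ a b) (Omt t j₁ j₂ a b) t)
    (hOm1 : ∀ t j₁ j₂, Om t j₁ (j₂ + 1) - Om t j₁ j₂ = η t j₁ j₂ * θ t j₁ j₂)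
    (hOm2 : ∀ t j₁ j₂, Om t (j₁ + 1) (j₂ - 1) - (1 + Q t j₁ j₂) * Om t (j₁ + 1) j₂
        + Om t j₁ j₂ * P t j₁ j₂
        + (η t (j₁ + 1) (j₂ - 1) - η t j₁ j₂) * θ t (j₁ + 1) (j₂ - 1) = 0)
    (hOm3 : ∀ t j₁ j₂, Omt t j₁ j₂ = -(ηt t j₁ j₂ * θ t j₁ j₂))
    (g : ℝ → ℤ → ℤ → Matrix (Fin m) (Fin m) ℂ)
    (hg : ∀ t j₁ j₂, g t j₁ j₂
      = (1 - θ t j₁ j₂ * (Om t j₁ (j₂ + 1))⁻¹ * η t j₁ j₂) * g₀ t j₁ j₂) :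
    ∀ t j₁ j₂ (a b : Fin m),
      HasDerivAt (fun s => (g s j₁ j₂ * (g s (j₁ + 1) j₂)⁻¹) a b)
        ((g t j₁ j₂ * (g t j₁ (j₂ + 1))⁻¹
          - g t (j₁ + 1) (j₂ - 1) * (g t (j₁ + 1) j₂)⁻¹) a b) t := by
  intro t j₁ j₂ a b
  have hK := hasMatrixDerivAt_dressingPotential g₀ g θ θt η ηt Om Omt hθt hθ2 hηt hη2 hOminv hOmt
    hOm1 hOm3 hg t
  have hratio := dressed_mul_inv_eq_add_dressingPotential g₀ g P Q Om θ η hθ1 hη1 hOminv hOm1 hOm2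
    hg
  have hsum := ((hseed t j₁ j₂ a b).fun_add (hK j₁ (j₂ + 1) a b)).fun_sub (hK (j₁ + 1) j₂ a b)
  rw [add_sub_cancel_right] at hsum
  refine (hsum.congr_deriv ?_).congr_of_eventuallyEq (.of_forall fun s => ?_)
  · simp only [Matrix.sub_apply]
    abel
  · simp only [hratio, Matrix.add_apply, Matrix.sub_apply]

/-- binary Darboux transformation for the semi-discrete chiral model.
With `ω̃ (= om)` satisfying `ω̃_t = 0`, `ω̃_{,2} = ω̃` and `Q ω̃_{,1} = ω̃ P` (so `γ₁ = γ₂ = 0`),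
the transformed function `g = (I − θ Ω̃_{,2}⁻¹ η) g₀`, if invertible, again satisfies the
semi-discrete chiral model equation. -/
theorem stmt_6 (m n : ℕ)
    (g₀ : ℝ → ℤ → ℤ → Matrix (Fin m) (Fin m) ℂ)
    (hg₀inv : ∀ t j₁ j₂, IsUnit (g₀ t j₁ j₂))
    (hg₀diff : ∀ t j₁ j₂ (a b : Fin m), DifferentiableAt ℝ (fun s => g₀ s j₁ j₂ a b) t)
    (hseed : ∀ t j₁ j₂ (a b : Fin m),
      HasDerivAt (fun s => (g₀ s j₁ j₂ * (g₀ s (j₁ + 1) j₂)⁻¹) a b)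
        ((g₀ t j₁ j₂ * (g₀ t j₁ (j₂ + 1))⁻¹
          - g₀ t (j₁ + 1) (j₂ - 1) * (g₀ t (j₁ + 1) j₂)⁻¹) a b) t)
    (P Q : ℝ → ℤ → ℤ → Matrix (Fin n) (Fin n) ℂ)
    (hPt : ∀ t j₁ j₂ (a b : Fin n), HasDerivAt (fun s => P s j₁ j₂ a b) 0 t)
    (hP2 : ∀ t j₁ j₂, P t j₁ (j₂ + 1) = P t j₁ j₂)
    (hQt : ∀ t j₁ j₂ (a b : Fin n), HasDerivAt (fun s => Q s j₁ j₂ a b) 0 t)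
    (hQ2 : ∀ t j₁ j₂, Q t j₁ (j₂ + 1) = Q t j₁ j₂)
    (om : ℝ → ℤ → ℤ → Matrix (Fin n) (Fin n) ℂ)
    (homt : ∀ t j₁ j₂ (a b : Fin n), HasDerivAt (fun s => om s j₁ j₂ a b) 0 t)
    (hom2 : ∀ t j₁ j₂, om t j₁ (j₂ + 1) = om t j₁ j₂)
    (homPQ : ∀ t j₁ j₂, Q t j₁ j₂ * om t (j₁ + 1) j₂ = om t j₁ j₂ * P t j₁ j₂)
    (θ θt : ℝ → ℤ → ℤ → Matrix (Fin m) (Fin n) ℂ)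
    (hθt : ∀ t j₁ j₂ (a : Fin m) (b : Fin n),
      HasDerivAt (fun s => θ s j₁ j₂ a b) (θt t j₁ j₂ a b) t)
    (hθ1 : ∀ t j₁ j₂, θ t j₁ (j₂ - 1)
      = -(θ t (j₁ - 1) j₂ * P t (j₁ - 1) j₂) - g₀ t (j₁ - 1) j₂ * (g₀ t j₁ j₂)⁻¹ * θ t j₁ j₂)
    (hθ2 : ∀ t j₁ j₂, θt t j₁ j₂ = g₀ t j₁ j₂ * (g₀ t j₁ (j₂ + 1))⁻¹ * θ t j₁ (j₂ + 1))
    (η ηt : ℝ → ℤ → ℤ → Matrix (Fin n) (Fin m) ℂ)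
    (hηt : ∀ t j₁ j₂ (a : Fin n) (b : Fin m),
      HasDerivAt (fun s => η s j₁ j₂ a b) (ηt t j₁ j₂ a b) t)
    (hη1 : ∀ t j₁ j₂, η t j₁ (j₂ + 1)
      = -(Q t j₁ j₂ * η t (j₁ + 1) j₂) - η t j₁ j₂ * (g₀ t j₁ j₂ * (g₀ t (j₁ + 1) j₂)⁻¹))
    (hη2 : ∀ t j₁ j₂, ηt t j₁ j₂ = -((η t j₁ (j₂ - 1) * g₀ t j₁ (j₂ - 1)) * (g₀ t j₁ j₂)⁻¹))
    (Om Omt : ℝ → ℤ → ℤ → Matrix (Fin n) (Fin n) ℂ)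
    (hOminv : ∀ t j₁ j₂, IsUnit (Om t j₁ j₂))
    (hOmt : ∀ t j₁ j₂ (a b : Fin n), HasDerivAt (fun s => Om s j₁ j₂ a b) (Omt t j₁ j₂ a b) t)
    (hOm1 : ∀ t j₁ j₂, Om t j₁ (j₂ + 1) - Om t j₁ j₂ = η t j₁ j₂ * θ t j₁ j₂)
    (hOm2 : ∀ t j₁ j₂, Om t (j₁ + 1) (j₂ - 1) - (1 + Q t j₁ j₂) * Om t (j₁ + 1) j₂
        + Om t j₁ j₂ * P t j₁ j₂
        + (η t (j₁ + 1) (j₂ - 1) - η t j₁ j₂) * θ t (j₁ + 1) (j₂ - 1) = 0)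
    (hOm3 : ∀ t j₁ j₂, Omt t j₁ j₂ = -(ηt t j₁ j₂ * θ t j₁ j₂))
    (g : ℝ → ℤ → ℤ → Matrix (Fin m) (Fin m) ℂ)
    (hg : ∀ t j₁ j₂, g t j₁ j₂
      = (1 - θ t j₁ j₂ * (Om t j₁ (j₂ + 1))⁻¹ * η t j₁ j₂) * g₀ t j₁ j₂)
    (hginv : ∀ t j₁ j₂, IsUnit (g t j₁ j₂)) :
    ∀ t j₁ j₂ (a b : Fin m),
      HasDerivAt (fun s => (g s j₁ j₂ * (g s (j₁ + 1) j₂)⁻¹) a b)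
        ((g t j₁ j₂ * (g t j₁ (j₂ + 1))⁻¹
          - g t (j₁ + 1) (j₂ - 1) * (g t (j₁ + 1) j₂)⁻¹) a b) t :=
  stmt_6_general m n g₀ hseed P Q θ θt hθt hθ1 hθ2 η ηt hηt hη1 hη2 Om Omt hOminv hOmt hOm1 hOm2
    hOm3 g hg
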